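/- Let r ≥ 1 and suppose n = 2r or n = 2r − 1 with n ≥ 2. Define ξ_j = e^{2πi(j−1)/n} and ζ_j = e^{2πi(j−r)/n} for j = 1,…,n. Let 0 < ϑ < π/(2n), and define the sector S_n(ϑ) = { z ∈ ℂ∖{0} : −π/2 − π/n + ϑ < arg z < −π/2 + 3π/n − ϑ } if n = 2r, and S_n(ϑ) = { z ∈ ℂ∖{0} : −π/2 − π/n + ϑ < arg z < −π/2 + 2π/n − ϑ } if n = 2r − 1. Then: (1.1) for every k ∈ {1,…,r} and every z ∈ ℂ, Im(ξ_k z + ζ_{r−k+1} z̄) = 0; (1.2) for all k, j ∈ {1,…,r} with k + j ≥ r + 2 and every z ∈ S_n(ϑ), Im(ξ_k z + ζ_j z̄) ≥ 2·sin((k+j−r−1)π/n)·sin ϑ · |z|; (2.1) for every k ∈ {1,…,n−r} and every z ∈ ℂ, Im(ξ_{k+r} z + ζ_{n−k+1} z̄) = 0; (2.2) for all k, j ∈ {1,…,n−r} with k + j ≤ n − r and every z ∈ S_n(ϑ), Im(ξ_{k+r} z + ζ_{j+r} z̄) ≥ 2·sin((n−r−k−j+1)π/n)·sin ϑ · |z|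 when n = 2r, and Im(ξ_{k+r} z + ζ_{j+r} z̄) ≥ 2·sin((n−r−k−j+1)π/n)·sin(π/n + ϑ) · |z| when n = 2r − 1. -/

import Mathlib

open scoped Real

/-- The root of unity `ξ_j = e^{2πi(j−1)/n}`. -/
noncomputable def xiRoot (n j : ℕ) : ℂ :=
  Complex.exp (2 * (π : ℂ) * Complex.I * ((j : ℂ) - 1) / (n : ℂ))

/-- The root of unity `ζ_j = e^{2πi(j−r)/n}`. -/
noncomputable def zetaRoot (n r j : ℕ) : ℂ :=
  Complex.exp (2 * (π : ℂ) * Complex.I * ((j : ℂ) - (r : ℂ)) / (n : ℂ))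

/-- The sector `S_n(ϑ)` (for `n = 2r` resp. `n = 2r−1`). -/
def sectorN (n r : ℕ) (ϑ : ℝ) : Set ℂ :=
  if n = 2 * r then
    {z : ℂ | z ≠ 0 ∧ -π/2 - π/n + ϑ < Complex.arg z ∧ Complex.arg z < -π/2 + 3*π/n - ϑ}
  else
    {z : ℂ | z ≠ 0 ∧ -π/2 - π/n + ϑ < Complex.arg z ∧ Complex.arg z < -π/2 + 2*π/n - ϑ}

lemma sin_add_sin' (P Q : ℝ) : Real.sin (P + Q) + Real.sin (P - Q) = 2 * Real.sin P * Real.cos Q := by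
  rw [Real.sin_add, Real.sin_sub]; ring

lemma im_formula (a b : ℝ) (z : ℂ) :
    (Complex.exp ((a:ℂ) * Complex.I) * z + Complex.exp ((b:ℂ) * Complex.I) * (starRingEnd ℂ) z).im
      = 2 * Real.sin ((a + b) / 2) * Real.cos ((a - b) / 2 + z.arg) * ‖z‖ := by
  have hre := Complex.norm_mul_cos_arg z
  have him := Complex.norm_mul_sin_arg z
  have h1 : a + z.arg = (a+b)/2 + ((a-b)/2 + z.arg) := by ring
  have h2 : b - z.arg = (a+b)/2 - ((a-b)/2 + z.arg) := by ring
  have key := sin_add_sin' ((a+b)/2) ((a-b)/2 + z.arg)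
  rw [← h1, ← h2] at key
  simp only [Complex.add_im, Complex.mul_im, Complex.exp_ofReal_mul_I_re,
    Complex.exp_ofReal_mul_I_im, Complex.conj_re, Complex.conj_im]
  rw [Real.sin_add, Real.sin_sub] at key
  rw [← hre, ← him]
  linear_combination ‖z‖ * key

lemma cos_ge_of_abs_le {x c : ℝ} (h1 : -(π/2 - c) ≤ x) (h2 : x ≤ π/2 - c)
    (hc0 : 0 ≤ c) (hc2 : c ≤ π/2) : Real.sin c ≤ Real.cos x := by
  have habs : |x| ≤ π/2 - c := abs_le.2 ⟨h1, h2⟩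
  have := Real.cos_le_cos_of_nonneg_of_le_pi (abs_nonneg x)
    (by linarith [Real.pi_pos] : π/2 - c ≤ π) habs
  rw [Real.cos_abs] at this
  calc Real.sin c = Real.cos (π/2 - c) := (Real.cos_pi_div_two_sub c).symm
    _ ≤ Real.cos x := this

lemma key_ineq (a b c : ℝ) (z : ℂ)
    (h0 : 0 ≤ Real.sin ((a+b)/2)) (hc0 : 0 ≤ c) (hc2 : c ≤ π/2)
    (h1 : -(π/2 - c) ≤ (a-b)/2 + z.arg) (h2 : (a-b)/2 + z.arg ≤ π/2 - c) :
    2 * Real.sin ((a+b)/2) * Real.sin c * ‖z‖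
      ≤ (Complex.exp ((a:ℂ) * Complex.I) * z + Complex.exp ((b:ℂ) * Complex.I) * (starRingEnd ℂ) z).im := by
  rw [im_formula]
  have hcos := cos_ge_of_abs_le h1 h2 hc0 hc2
  have h2S : (0:ℝ) ≤ 2 * Real.sin ((a+b)/2) := by linarith
  exact mul_le_mul_of_nonneg_right (mul_le_mul_of_nonneg_left hcos h2S) (norm_nonneg z)

lemma xi_eq (n j : ℕ) (hn : (n:ℝ) ≠ 0) :
    xiRoot n j = Complex.exp (((2*π*((j:ℝ)-1)/n : ℝ):ℂ) * Complex.I) := by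
  unfold xiRoot
  congr 1
  have : (n:ℂ) ≠ 0 := by exact_mod_cast hn
  push_cast
  field_simp

lemma zeta_eq (n r j : ℕ) (hn : (n:ℝ) ≠ 0) :
    zetaRoot n r j = Complex.exp (((2*π*((j:ℝ)-(r:ℝ))/n : ℝ):ℂ) * Complex.I) := by
  unfold zetaRoot
  congr 1
  have : (n:ℂ) ≠ 0 := by exact_mod_cast hn
  push_cast
  field_simp

lemma coeff_mono {c d : ℝ} {n : ℕ} (hn : 0 < (n:ℝ)) (h : c ≤ d) :
    c * π / n ≤ d * π / n :=
  (div_le_div_iff_of_pos_right hn).mpr (mul_le_mul_of_nonneg_right h Real.pi_pos.le)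

lemma pi_sub_div (n : ℕ) (hn : (n:ℝ) ≠ 0) (c : ℝ) :
    ((n:ℝ) - c) * π / n = π - c * π / n := by
  field_simp


set_option maxHeartbeats 1000000 in
/-- Vanishing and positivity of `Im(ξ_k z + ζ_j z̄)` on the sector
`S_n(ϑ)`, for the index ranges appearing in the second connection formula. -/
theorem stmt_19 (r n : ℕ) (hr : 1 ≤ r) (hn2 : 2 ≤ n)
    (hnr : n = 2 * r ∨ n = 2 * r - 1)
    (ϑ : ℝ) (hϑ0 : 0 < ϑ) (hϑ1 : ϑ < π / (2 * n)) :
    (∀ k : ℕ, 1 ≤ k → k ≤ r → ∀ z : ℂ,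
        (xiRoot n k * z + zetaRoot n r (r - k + 1) * (starRingEnd ℂ) z).im = 0) ∧
      (∀ k j : ℕ, 1 ≤ k → k ≤ r → 1 ≤ j → j ≤ r → r + 2 ≤ k + j →
        ∀ z ∈ sectorN n r ϑ,
          2 * Real.sin (((k + j - r - 1 : ℕ) : ℝ) * π / n) * Real.sin ϑ * ‖z‖
            ≤ (xiRoot n k * z + zetaRoot n r j * (starRingEnd ℂ) z).im) ∧
      (∀ k : ℕ, 1 ≤ k → k ≤ n - r → ∀ z : ℂ,
        (xiRoot n (k + r) * z + zetaRoot n r (n - k + 1) * (starRingEnd ℂ) z).im = 0) ∧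
      (∀ k j : ℕ, 1 ≤ k → k ≤ n - r → 1 ≤ j → j ≤ n - r → k + j ≤ n - r →
        ∀ z ∈ sectorN n r ϑ,
          (n = 2 * r →
            2 * Real.sin (((n - r - k - j + 1 : ℕ) : ℝ) * π / n) * Real.sin ϑ *
                ‖z‖
              ≤ (xiRoot n (k + r) * z + zetaRoot n r (j + r) * (starRingEnd ℂ) z).im) ∧
          (n = 2 * r - 1 →
            2 * Real.sin (((n - r - k - j + 1 : ℕ) : ℝ) * π / n) *
                Real.sin (π / n + ϑ) * ‖z‖
              ≤ (xiRoot n (k + r) * z + zetaRoot n r (j + r) * (starRingEnd ℂ) z).im)) := by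
  have hπ := Real.pi_pos
  have hnpos : (0:ℝ) < (n:ℝ) := by exact_mod_cast Nat.lt_of_lt_of_le Nat.zero_lt_two hn2
  have hn0 : (n:ℝ) ≠ 0 := ne_of_gt hnpos
  have ht : (0:ℝ) < π / n := div_pos hπ hnpos
  have hrn : r ≤ n := by rcases hnr with h|h <;> omega
  have hn2' : (2:ℝ) ≤ (n:ℝ) := by exact_mod_cast hn2
  have hϑ2 : ϑ ≤ π / 2 := by
    have h2n : π / (2*(n:ℝ)) ≤ π / 2 := by
      apply div_le_div_of_nonneg_left hπ.le two_pos
      linarith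
    linarith
  refine ⟨?_, ?_, ?_, ?_⟩
  · -- (1.1)
    intro k hk1 hkr z
    rw [xi_eq n k hn0, zeta_eq n r (r - k + 1) hn0, im_formula]
    have hc : ((r - k + 1 : ℕ):ℝ) = (r:ℝ) - k + 1 := by
      rw [Nat.cast_add, Nat.cast_sub hkr, Nat.cast_one]
    have h0 : (2*π*((k:ℝ)-1)/n + 2*π*(((r - k + 1 : ℕ):ℝ)-(r:ℝ))/n)/2 = 0 := by
      rw [hc]; ring
    rw [h0, Real.sin_zero]; ring
  · -- (1.2)
    intro k j hk1 hkr hj1 hjr hkj z hz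
    rw [xi_eq n k hn0, zeta_eq n r j hn0]
    set a : ℝ := 2*π*((k:ℝ)-1)/n with ha
    set b : ℝ := 2*π*((j:ℝ)-(r:ℝ))/n with hb
    obtain ⟨m, hm1, hm2⟩ : ∃ m, k + j - r - 1 = m ∧ m + r + 1 = k + j := ⟨_, rfl, by omega⟩
    have hmc : (m:ℝ) + r + 1 = (k:ℝ) + j := by exact_mod_cast hm2
    have hsum : ((k + j - r - 1 : ℕ):ℝ) * π / n = (a + b)/2 := by
      rw [hm1, ha, hb]
      rw [show (m:ℝ) = (k:ℝ) + j - r - 1 from by linarith]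
      ring
    rw [hsum]
    have hψ : (a-b)/2 = ((k:ℝ)-1-(j:ℝ)+r) * π / n := by rw [ha, hb]; ring
    have hd1n : j + 2 ≤ k + r := by omega
    have hd1 : (1:ℝ) ≤ (k:ℝ)-1-j+r := by
      have h'' : (j:ℝ) + 2 ≤ (k:ℝ)+r := by exact_mod_cast hd1n
      linarith
    have hψ1 : (1:ℝ)*π/n ≤ (a-b)/2 := hψ ▸ coeff_mono hnpos hd1
    rw [one_mul] at hψ1
    apply key_ineq
    · rw [← hsum, hm1]
      apply Real.sin_nonneg_of_nonneg_of_le_pi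
      · positivity
      · have hmn : m ≤ n := by omega
        calc (m:ℝ)*π/n ≤ (n:ℝ)*π/n := coeff_mono hnpos (by exact_mod_cast hmn)
          _ = π := by field_simp
    · exact hϑ0.le
    · exact hϑ2
    · rcases hnr with hcase | hcase
      · simp only [sectorN, if_pos hcase] at hz
        obtain ⟨-, hlo, -⟩ := hz
        linarith
      · simp only [sectorN, if_neg (by omega : ¬ n = 2*r)] at hz
        obtain ⟨-, hlo, -⟩ := hz
        linarith
    · rcases hnr with hcase | hcase
      · simp only [sectorN, if_pos hcase] at hz
        obtain ⟨-, -, hhi⟩ := hz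
        have hd2n : k + r + 2 ≤ n + j := by omega
        have hd2 : (k:ℝ)-1-j+r ≤ (n:ℝ)-3 := by
          have h'' : (k:ℝ) + r + 2 ≤ (n:ℝ) + j := by exact_mod_cast hd2n
          linarith
        have hψ2 : (a-b)/2 ≤ ((n:ℝ)-3)*π/n := hψ ▸ coeff_mono hnpos hd2
        rw [pi_sub_div n hn0 3] at hψ2
        linarith
      · simp only [sectorN, if_neg (by omega : ¬ n = 2*r)] at hz
        obtain ⟨-, -, hhi⟩ := hz
        have hd2n : k + r + 1 ≤ n + j := by omega
        have hd2 : (k:ℝ)-1-j+r ≤ (n:ℝ)-2 := by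
          have h'' : (k:ℝ) + r + 1 ≤ (n:ℝ) + j := by exact_mod_cast hd2n
          linarith
        have hψ2 : (a-b)/2 ≤ ((n:ℝ)-2)*π/n := hψ ▸ coeff_mono hnpos hd2
        rw [pi_sub_div n hn0 2] at hψ2
        linarith
  · -- (2.1)
    intro k hk1 hknr z
    have hkn : k ≤ n := le_trans hknr (Nat.sub_le n r)
    rw [xi_eq n (k + r) hn0, zeta_eq n r (n - k + 1) hn0, im_formula]
    have hc1 : ((k + r : ℕ):ℝ) = (k:ℝ) + r := by push_cast; ring
    have hc2 : ((n - k + 1 : ℕ):ℝ) = (n:ℝ) - k + 1 := by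
      rw [Nat.cast_add, Nat.cast_sub hkn, Nat.cast_one]
    have h0 : (2*π*(((k + r : ℕ):ℝ)-1)/n + 2*π*(((n - k + 1 : ℕ):ℝ)-(r:ℝ))/n)/2 = π := by
      rw [hc1, hc2]; field_simp; ring
    rw [h0, Real.sin_pi]; ring
  · -- (2.2)
    intro k j hk1 hknr hj1 hjnr hkj z hz
    rw [xi_eq n (k + r) hn0, zeta_eq n r (j + r) hn0]
    set a : ℝ := 2*π*(((k + r : ℕ):ℝ)-1)/n with ha
    set b : ℝ := 2*π*(((j + r : ℕ):ℝ)-(r:ℝ))/n with hb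
    obtain ⟨s, hs1, hs2⟩ : ∃ s, n - r - k - j + 1 = s ∧ s + (r + k + j) = n + 1 :=
      ⟨_, rfl, by omega⟩
    have hsc : (s:ℝ) + ((r:ℝ) + k + j) = (n:ℝ) + 1 := by exact_mod_cast hs2
    have habsum : (a + b)/2 = ((k:ℝ) + r - 1 + j) * π / n := by
      rw [ha, hb]; push_cast; ring
    have hsin : Real.sin (((n - r - k - j + 1 : ℕ):ℝ) * π / n) = Real.sin ((a + b)/2) := by
      rw [hs1]
      have h2 : (a + b)/2 = π - (s:ℝ)*π/n := by
        rw [habsum, show (k:ℝ) + r - 1 + j = (n:ℝ) - s from by linarith, pi_sub_div n hn0 s]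
      rw [h2, Real.sin_pi_sub]
    have h0 : 0 ≤ Real.sin ((a + b)/2) := by
      rw [← hsin]
      apply Real.sin_nonneg_of_nonneg_of_le_pi
      · positivity
      · have hsn : n - r - k - j + 1 ≤ n := by omega
        calc ((n - r - k - j + 1 : ℕ):ℝ)*π/n ≤ (n:ℝ)*π/n :=
              coeff_mono hnpos (by exact_mod_cast hsn)
          _ = π := by field_simp
    have hψ : (a-b)/2 = ((k:ℝ)+r-1-(j:ℝ)) * π / n := by rw [ha, hb]; push_cast; ring
    constructor
    · intro hcase
      rw [hsin]
      have hd1n : j + 2 ≤ k + r := by omega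
      have hd1 : (1:ℝ) ≤ (k:ℝ)+r-1-j := by
        have h'' : (j:ℝ) + 2 ≤ (k:ℝ)+r := by exact_mod_cast hd1n
        linarith
      have hψ1 : (1:ℝ)*π/n ≤ (a-b)/2 := hψ ▸ coeff_mono hnpos hd1
      rw [one_mul] at hψ1
      have hd2n : k + r + 2 ≤ n + j := by omega
      have hd2 : (k:ℝ)+r-1-j ≤ (n:ℝ)-3 := by
        have h'' : (k:ℝ) + r + 2 ≤ (n:ℝ) + j := by exact_mod_cast hd2n
        linarith
      have hψ2 : (a-b)/2 ≤ ((n:ℝ)-3)*π/n := hψ ▸ coeff_mono hnpos hd2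
      rw [pi_sub_div n hn0 3] at hψ2
      simp only [sectorN, if_pos hcase] at hz
      obtain ⟨-, hlo, hhi⟩ := hz
      exact key_ineq a b ϑ z h0 hϑ0.le hϑ2 (by linarith) (by linarith)
    · intro hcase
      rw [hsin]
      have hn3 : 3 ≤ n := by omega
      have hn3' : (3:ℝ) ≤ (n:ℝ) := by exact_mod_cast hn3
      have htn3 : π/(n:ℝ) ≤ π/3 := div_le_div_of_nonneg_left hπ.le (by norm_num) hn3'
      have hc2' : π/(n:ℝ) + ϑ ≤ π/2 := by
        have : π/(2*(n:ℝ)) = (π/(n:ℝ))/2 := by ring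
        linarith
      have hd1n : j + 3 ≤ k + r := by omega
      have hd1 : (2:ℝ) ≤ (k:ℝ)+r-1-j := by
        have h'' : (j:ℝ) + 3 ≤ (k:ℝ)+r := by exact_mod_cast hd1n
        linarith
      have hψ1 : (2:ℝ)*π/n ≤ (a-b)/2 := hψ ▸ coeff_mono hnpos hd1
      have hψ1' : 2*(π/(n:ℝ)) ≤ (a-b)/2 := by rw [show 2*(π/(n:ℝ)) = 2*π/n from by ring]; exact hψ1
      have hd2n : k + r + 2 ≤ n + j := by omega
      have hd2 : (k:ℝ)+r-1-j ≤ (n:ℝ)-3 := by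
        have h'' : (k:ℝ) + r + 2 ≤ (n:ℝ) + j := by exact_mod_cast hd2n
        linarith
      have hψ2 : (a-b)/2 ≤ ((n:ℝ)-3)*π/n := hψ ▸ coeff_mono hnpos hd2
      rw [pi_sub_div n hn0 3] at hψ2
      simp only [sectorN, if_neg (by omega : ¬ n = 2*r)] at hz
      obtain ⟨-, hlo, hhi⟩ := hz
      have h3 : 3*π/(n:ℝ) = 3*(π/(n:ℝ)) := by ring
      have hhi' : z.arg < -π/2 + 2*(π/(n:ℝ)) - ϑ := by
        rw [show 2*(π/(n:ℝ)) = 2*π/(n:ℝ) from by ring]; exact hhi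
      exact key_ineq a b (π/(n:ℝ) + ϑ) z h0 (by positivity) hc2'
        (by rw [h3] at hψ2; linarith) (by rw [h3] at hψ2; linarith)
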